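/- Let n ≥ 3 and q_i(x) = xᵀA_ix for symmetric matrices A₀, A₁, A₂ ∈ R^{n×n}. Assume (C1) there exist μ₁, μ₂ with μ₁A₁+μ₂A₂ positive definite and (C2) there exists x⁰ with q₁(x⁰)=1, q₂(x⁰)<1. If x* is a local minimizer of q₀ over {x : q₁(x)=1, q₂(x) ≤ 1} with q₂(x*) = 1 and the gradients A₁x* and A₂x* are linearly dependent, then x* is a global minimizer (additionally assume (C3) there exists x¹ with q₁(x¹)=1, q₂(x¹)>1). -/

import Mathlib

/-! Failure of LICQ at `x*` forces `A₁x* = A₂x*`, since pairing both vectors with `x*` gives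
`q₁(x*) = q₂(x*) = 1`. A feasible `y` then splits as `y = αx* + d` with `d` orthogonal to `x*`
for both forms, and `q₂(d) ≤ q₁(d)`. The curve `t ↦ (x* + td) / √(1 + t² q₁(d))` is feasible
near `t = 0` and passes through `x*`, so local minimality yields the first- and second-order
conditions `polar q₀ x* d = 0` and `q₀(d) ≥ q₀(x*) q₁(d)`; these add up to `q₀(y) ≥ q₀(x*)`. -/

open Matrix

/-- The quadratic form `xᵀ A x` on Euclidean space. -/
noncomputable def quadForm {n : ℕ} (A : Matrix (Fin n) (Fin n) ℝ)
    (x : EuclideanSpace ℝ (Fin n)) : ℝ :=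
  ∑ i, ∑ j, A i j * x i * x j

open Filter Topology

theorem eq_zero_and_nonneg_of_isLocalMin_mul_add_sq_mul {L C : ℝ}
    (h : IsLocalMin (fun t : ℝ => t * L + t ^ 2 * C) 0) : L = 0 ∧ 0 ≤ C := by
  have hL : L = 0 := by
    simpa using h.hasDerivAt_eq_zero
      (((hasDerivAt_id' 0).mul_const L).add ((hasDerivAt_pow 2 0).mul_const C))
  refine ⟨hL, ?_⟩
  obtain ⟨t, ht, ht0⟩ :=
    ((h.filter_mono nhdsWithin_le_nhds).and (self_mem_nhdsWithin (s := {0}ᶜ))).exists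
  have : 0 < t ^ 2 := sq_pos_of_ne_zero ht0
  simp only [hL] at ht
  nlinarith

namespace QuadraticMap

variable {E : Type*} [AddCommGroup E] [Module ℝ E]

theorem map_add_smul (Q : QuadraticForm ℝ E) (x d : E) (t : ℝ) :
    Q (x + t • d) = Q x + t * polar Q x d + t ^ 2 * Q d := by
  rw [QuadraticMap.map_add (⇑Q), QuadraticMap.map_smul, polar_smul_right, smul_eq_mul, smul_eq_mul]
  ring

variable [TopologicalSpace E] [ContinuousAdd E] [ContinuousSMul ℝ E]

theorem polar_eq_zero_and_mul_le_of_isLocalMinOn {Q₀ Q₁ Q₂ : QuadraticForm ℝ E} {x d : E}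
    (hloc : IsLocalMinOn Q₀ {y | Q₁ y = 1 ∧ Q₂ y ≤ 1} x) (hx₁ : Q₁ x = 1) (hx₂ : Q₂ x = 1)
    (hd₁ : polar Q₁ x d = 0) (hd₂ : polar Q₂ x d = 0) (hd : Q₂ d ≤ Q₁ d) :
    polar Q₀ x d = 0 ∧ Q₀ x * Q₁ d ≤ Q₀ d := by
  set s : ℝ → ℝ := fun t => 1 + t ^ 2 * Q₁ d
  set c : ℝ → E := fun t => (√(s t))⁻¹ • (x + t • d)
  have hs_cont : Continuous s := by fun_prop
  have hs : ∀ᶠ t in 𝓝 0, 0 < s t :=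
    continuousAt_const.eventually_lt hs_cont.continuousAt (by simp [s])
  have hc : Tendsto c (𝓝 0) (𝓝 x) := by
    have : ContinuousAt c 0 := by
      exact ((Real.continuous_sqrt.comp hs_cont).continuousAt.inv₀
        (by simp [s])).smul (by fun_prop)
    simpa [c, s] using this.tendsto
  have hval : ∀ (Q : QuadraticForm ℝ E) (t : ℝ), 0 < s t →
      Q (c t) = (Q x + t * polar Q x d + t ^ 2 * Q d) / s t := by
    intro Q t ht
    rw [QuadraticMap.map_smul, map_add_smul, smul_eq_mul, ← mul_inv, Real.mul_self_sqrt ht.le,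
      inv_mul_eq_div]
  have key : IsLocalMin (fun t : ℝ => t * polar Q₀ x d + t ^ 2 * (Q₀ d - Q₀ x * Q₁ d)) 0 := by
    filter_upwards [hc.eventually (eventually_nhdsWithin_iff.mp hloc), hs] with t hmin ht
    have h₁ : Q₁ (c t) = 1 := by rw [hval Q₁ t ht, hx₁, hd₁, div_eq_one_iff_eq ht.ne']; ring
    have h₂ : Q₂ (c t) ≤ 1 := by
      rw [hval Q₂ t ht, hx₂, hd₂, div_le_one ht]
      nlinarith [mul_le_mul_of_nonneg_left hd (sq_nonneg t)]
    have h₀ := hmin ⟨h₁, h₂⟩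
    rw [hval Q₀ t ht, le_div_iff₀ ht] at h₀
    simp only [s] at h₀
    nlinarith
  obtain ⟨hL, hC⟩ := eq_zero_and_nonneg_of_isLocalMin_mul_add_sq_mul key
  exact ⟨hL, sub_nonneg.mp hC⟩

theorem isMinOn_of_isLocalMinOn_of_polar_eq {Q₀ Q₁ Q₂ : QuadraticForm ℝ E} {x : E}
    (hloc : IsLocalMinOn Q₀ {y | Q₁ y = 1 ∧ Q₂ y ≤ 1} x) (hx : Q₁ x = 1)
    (hpolar : polar Q₂ x = polar Q₁ x) :
    IsMinOn Q₀ {y | Q₁ y = 1 ∧ Q₂ y ≤ 1} x := by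
  have hx₂ : Q₂ x = 1 := by
    have := congrFun hpolar x
    rw [polar_self, polar_self, hx] at this
    simpa using this
  rintro y ⟨hy₁, hy₂⟩
  set α := polar Q₁ x y / 2
  set d := y - α • x
  have hd₁ : polar Q₁ x d = 0 := by
    rw [polar_sub_right, polar_smul_right, polar_self, hx, smul_eq_mul]
    simp [α]
  have hd₂ : polar Q₂ x d = 0 := by rw [hpolar, hd₁]
  have hy : ∀ Q : QuadraticForm ℝ E, Q y = Q d + α * polar Q x d + α ^ 2 * Q x := by
    intro Q
    rw [polar_comm, ← map_add_smul, sub_add_cancel]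
  have hQ₁d : Q₁ d = 1 - α ^ 2 := by rw [← hy₁, hy, hd₁, hx]; ring
  have hQ₂d : Q₂ d = Q₂ y - α ^ 2 := by rw [hy, hd₂, hx₂]; ring
  obtain ⟨hL, hC⟩ := polar_eq_zero_and_mul_le_of_isLocalMinOn hloc hx hx₂ hd₁ hd₂ <| by
    rw [hQ₁d, hQ₂d]; linarith
  show Q₀ x ≤ Q₀ y
  rw [hQ₁d] at hC
  rw [hy Q₀, hL]
  linear_combination hC

end QuadraticMap

theorem eq_of_not_linearIndependent_of_apply_eq {K V : Type*} [Field K] [AddCommGroup V]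
    [Module K V] {u v : V} (f : Module.Dual K V) (h : ¬LinearIndependent K ![u, v])
    (huv : f u = f v) (hv : f v ≠ 0) : u = v := by
  simp only [linearIndependent_fin2, cons_val_one, cons_val_zero, not_and_or, not_forall,
    not_not] at h
  obtain hv0 | ⟨a, rfl⟩ := h
  · simp [hv0] at hv
  · rw [map_smul, smul_eq_mul, mul_eq_right₀ hv] at huv
    rw [huv, one_smul]

namespace Matrix

variable {n : ℕ}

noncomputable def toEuclideanQuadraticForm (A : Matrix (Fin n) (Fin n) ℝ) :
    QuadraticForm ℝ (EuclideanSpace ℝ (Fin n)) :=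
  A.toQuadraticForm'.comp (WithLp.linearEquiv 2 ℝ (Fin n → ℝ)).toLinearMap

theorem quadForm_eq_dotProduct (A : Matrix (Fin n) (Fin n) ℝ) (x : EuclideanSpace ℝ (Fin n)) :
    quadForm A x = x.ofLp ⬝ᵥ A *ᵥ x.ofLp := by
  simp only [quadForm, dotProduct, mulVec, Finset.mul_sum]
  exact Finset.sum_congr rfl fun i _ => Finset.sum_congr rfl fun j _ => by ring

theorem coe_toEuclideanQuadraticForm (A : Matrix (Fin n) (Fin n) ℝ) :
    ⇑A.toEuclideanQuadraticForm = quadForm A := by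
  ext x
  simp [toEuclideanQuadraticForm, toQuadraticForm', toLinearMap₂'_apply', quadForm_eq_dotProduct]

theorem polar_toEuclideanQuadraticForm {A : Matrix (Fin n) (Fin n) ℝ} (hA : Aᵀ = A)
    (x y : EuclideanSpace ℝ (Fin n)) :
    QuadraticMap.polar A.toEuclideanQuadraticForm x y = 2 * (y.ofLp ⬝ᵥ A *ᵥ x.ofLp) := by
  change QuadraticMap.polar A.toQuadraticForm' x.ofLp y.ofLp = _
  rw [toQuadraticForm', LinearMap.BilinMap.polar_toQuadraticMap, toLinearMap₂'_apply',
    toLinearMap₂'_apply', dotProduct_mulVec, ← mulVec_transpose, hA, dotProduct_comm]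
  ring

end Matrix

theorem stmt12 {n : ℕ} (A₀ A₁ A₂ : Matrix (Fin n) (Fin n) ℝ)
    (h1 : A₁ᵀ = A₁) (h2 : A₂ᵀ = A₂)
    (xs : EuclideanSpace ℝ (Fin n))
    (hfeas1 : quadForm A₁ xs = 1) (hfeas2 : quadForm A₂ xs = 1)
    (hloc : ∃ ε > 0, ∀ x : EuclideanSpace ℝ (Fin n),
      quadForm A₁ x = 1 → quadForm A₂ x ≤ 1 → ‖x - xs‖ < ε →
      quadForm A₀ xs ≤ quadForm A₀ x)
    (hLICQfail : ¬ LinearIndependent ℝ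
      ![A₁.mulVec (fun i => xs i), A₂.mulVec (fun i => xs i)]) :
    ∀ x : EuclideanSpace ℝ (Fin n), quadForm A₁ x = 1 → quadForm A₂ x ≤ 1 →
      quadForm A₀ xs ≤ quadForm A₀ x := by
  have hA : A₁ *ᵥ xs.ofLp = A₂ *ᵥ xs.ofLp := by
    refine eq_of_not_linearIndependent_of_apply_eq (dotProductEquiv ℝ (Fin n) xs.ofLp)
      hLICQfail ?_ ?_ <;> simp [← quadForm_eq_dotProduct, hfeas1, hfeas2]
  have hpolar : QuadraticMap.polar A₂.toEuclideanQuadraticForm xs =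
      QuadraticMap.polar A₁.toEuclideanQuadraticForm xs := by
    ext y
    rw [polar_toEuclideanQuadraticForm h1, polar_toEuclideanQuadraticForm h2, hA]
  obtain ⟨ε, hε, hball⟩ := hloc
  have hlocMin : IsLocalMinOn (quadForm A₀) {y | quadForm A₁ y = 1 ∧ quadForm A₂ y ≤ 1} xs := by
    filter_upwards [inter_mem_nhdsWithin _ (Metric.ball_mem_nhds xs hε)]
    rintro x ⟨⟨hx₁, hx₂⟩, hx⟩
    exact hball x hx₁ hx₂ (mem_ball_iff_norm.mp hx)
  simp only [← coe_toEuclideanQuadraticForm] at hfeas1 hlocMin ⊢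
  exact fun x hx₁ hx₂ =>
    QuadraticMap.isMinOn_of_isLocalMinOn_of_polar_eq hlocMin hfeas1 hpolar ⟨hx₁, hx₂⟩
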